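/- Let $\Sigma_1, \Sigma_2$ be symmetric positive definite matrices. Then $\Sigma_1^{-1} \# \Sigma_2 = \Sigma_1^{-1/2}(\Sigma_1^{1/2}\Sigma_2\Sigma_1^{1/2})^{1/2}\Sigma_1^{-1/2}$; that is, the linear Monge map matrix $A$ between Gaussians with covariances $\Sigma_1$ and $\Sigma_2$ equals the matrix geometric mean of $\Sigma_1^{-1}$ and $\Sigma_2$. -/

import Mathlib

open Matrix MeasureTheory

/-- The symmetric positive semidefinite square root of a matrix (zero if the
matrix is not positive semidefinite). -/
noncomputable def msqrt {d : ℕ} (A : Matrix (Fin d) (Fin d) ℝ) : Matrix (Fin d) (Fin d) ℝ :=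
  open scoped Classical in
  if h : A.PosSemidef then
    (h.1.eigenvectorUnitary : Matrix (Fin d) (Fin d) ℝ) *
      diagonal (fun i => Real.sqrt (h.1.eigenvalues i)) *
      (star h.1.eigenvectorUnitary : Matrix (Fin d) (Fin d) ℝ) else 0

/-- The operator (spectral) norm of a matrix, as the norm of the induced map on
Euclidean space. -/
noncomputable def opNorm {d : ℕ} (A : Matrix (Fin d) (Fin d) ℝ) : ℝ :=
  ‖LinearMap.toContinuousLinearMap (Matrix.toEuclideanLin A)‖

/-- The smallest eigenvalue of a symmetric matrix (zero if not symmetric). -/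
noncomputable def lamMin {d : ℕ} (A : Matrix (Fin d) (Fin d) ℝ) : ℝ :=
  open scoped Classical in
  if h : A.IsHermitian then ⨅ i, h.eigenvalues i else 0

/-- Interpret a plain vector as a point of Euclidean space. -/
noncomputable def toE {d : ℕ} (v : Fin d → ℝ) : EuclideanSpace ℝ (Fin d) :=
  (WithLp.equiv 2 (Fin d → ℝ)).symm v

/-- The matrix geometric mean `B # C = B^{1/2} (B^{-1/2} C B^{-1/2})^{1/2} B^{1/2}`. -/
noncomputable def gmean {d : ℕ} (B C : Matrix (Fin d) (Fin d) ℝ) : Matrix (Fin d) (Fin d) ℝ :=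
  msqrt B * msqrt ((msqrt B)⁻¹ * C * (msqrt B)⁻¹) * msqrt B

open scoped MatrixOrder in
lemma msqrt_posSemidef_eq {d : ℕ} {A : Matrix (Fin d) (Fin d) ℝ} (h : A.PosSemidef) :
    msqrt A = CFC.sqrt A := by
  rw [CFC.sqrt_eq_cfc, cfc_nnreal_eq_real _ A, h.1.cfc_eq]
  simp only [msqrt, h, dite_true, IsHermitian.cfc, Real.coe_sqrt, Real.coe_toNNReal']
  congr 2
  · congr 1
    funext i
    simp [max_eq_left (h.eigenvalues_nonneg i)]

open scoped MatrixOrder in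
lemma msqrt_inv {d : ℕ} {S : Matrix (Fin d) (Fin d) ℝ} (h : S.PosDef) :
    msqrt S⁻¹ = (msqrt S)⁻¹ := by
  rw [msqrt_posSemidef_eq h.posSemidef, msqrt_posSemidef_eq h.inv.posSemidef]
  exact (h.posSemidef.inv_sqrt).symm

open scoped MatrixOrder in
lemma msqrt_det_ne_zero {d : ℕ} {S : Matrix (Fin d) (Fin d) ℝ} (h : S.PosDef) :
    (msqrt S).det ≠ 0 := by
  rw [msqrt_posSemidef_eq h.posSemidef, h.posSemidef.det_sqrt]
  have := h.det_pos
  simp [RCLike.sqrt_of_nonneg this.le]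
  positivity

theorem monge_map_eq_gmean {d : ℕ}
    (S1 S2 : Matrix (Fin d) (Fin d) ℝ) (h1 : S1.PosDef) (h2 : S2.PosDef) :
    gmean S1⁻¹ S2 = (msqrt S1)⁻¹ * msqrt (msqrt S1 * S2 * msqrt S1) * (msqrt S1)⁻¹ := by
  rw [gmean, msqrt_inv h1, Matrix.nonsing_inv_nonsing_inv _ ((msqrt_det_ne_zero h1).isUnit)]
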